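/- Let 𝔤 ⊆ 𝔰𝔭(1,n+1)_{ℍp} be a subalgebra such that the projection pr_ℍ(𝔤) to the ℍ-component (the a-entry of (a,A,X,b)) has real dimension 1. Then 𝔤 is not a Berger algebra, i.e., the span of {R(u,v) : R ∈ ℛ(𝔤), u, v ∈ ℝ^{4,4n+4}} is a proper subspace of 𝔤. -/

import Mathlib

/-! Write `c(u, v)` for the coefficient of `R(u, v) p = c(u, v) p` and `φ(u) = c(u, q)`. The
skew-adjointness of `R(u, v)` and the Bianchi identity give
`c(u, v) = φ(u) g(p, v) - φ(v) g(p, u)`. Every `c(u, v)` lies in the real line `ℝ a₀`, so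
`a₀⁻¹ c(u, v)` is real. Since `g(p, x q) = x̄`, this makes `φ(i q) j - φ(j q) i` a real
multiple of `a₀`, whence `φ(i q) = 0`; then `c(u, i q) = -φ(u) i` forces `φ = 0`, hence `c = 0`.
So every curvature value kills `p`, while `𝔤` contains an element acting on `p` by `a₀ ≠ 0`. -/

noncomputable section

/-- The `g`-orthogonal complement of `ℍp ⊕ ℍq` in a quaternionic-Hermitian space. -/
def Esub {V : Type*} [AddCommGroup V] [Module (Quaternion ℝ) V]
    (g : V → V → Quaternion ℝ) (p q : V) : Set V :=
  {v | g p v = 0 ∧ g q v = 0}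

open Quaternion

lemma Quaternion.eq_coe_of_mul_eq_smul {a x : ℍ[ℝ]} {t : ℝ} (ha : a ≠ 0) (h : a * x = t • a) :
    x = t := by
  refine mul_left_cancel₀ ha ?_
  rw [h, ← Quaternion.coe_mul_eq_smul, Quaternion.coe_commutes]

structure IsHermitianForm {V : Type*} [AddCommGroup V] [Module ℍ[ℝ] V]
    (g : V → V → ℍ[ℝ]) : Prop where
  add_right : ∀ x y z, g x (y + z) = g x y + g x z
  smul_left : ∀ (c : ℍ[ℝ]) x y, g (c • x) y = c * g x y
  star_swap : ∀ x y, star (g y x) = g x y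

namespace IsHermitianForm

variable {V : Type*} [AddCommGroup V] [Module ℍ[ℝ] V] {g : V → V → ℍ[ℝ]}

lemma zero_left (hg : IsHermitianForm g) (y : V) : g 0 y = 0 := by
  simpa using hg.smul_left 0 0 y

lemma zero_right (hg : IsHermitianForm g) (x : V) : g x 0 = 0 := by
  rw [← hg.star_swap, hg.zero_left, star_zero]

lemma neg_left (hg : IsHermitianForm g) (x y : V) : g (-x) y = -g x y := by
  simpa using hg.smul_left (-1) x y

lemma smul_right (hg : IsHermitianForm g) (c : ℍ[ℝ]) (x y : V) :
    g x (c • y) = g x y * star c := by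
  rw [← hg.star_swap, hg.smul_left, star_mul, hg.star_swap]

lemma eq_smul_of_eq_smul {p q x : V} (hg : IsHermitianForm g) (hpq : g p q = 1) {c : ℍ[ℝ]}
    (hx : x = c • p) : x = g x q • p := by
  rw [hx, hg.smul_left, hpq, mul_one]

end IsHermitianForm

/-- `R` has values in `𝔰𝔭(1,n+1)_{ℍp}` and the symmetries of an algebraic curvature tensor. -/
structure IsStabilizerCurvature {V : Type*} [AddCommGroup V] [Module ℍ[ℝ] V]
    (g : V → V → ℍ[ℝ]) (p : V) (R : V → V → V →ₗ[ℍ[ℝ]] V) : Prop where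
  skew_adjoint : ∀ u v x y, g (R u v x) y + g x (R u v y) = 0
  preserves_line : ∀ u v, ∃ c : ℍ[ℝ], R u v p = c • p
  antisymm : ∀ u v, R u v = -R v u
  bianchi : ∀ u v w, R u v w + R v w u + R w u v = 0

namespace IsStabilizerCurvature

variable {V : Type*} [AddCommGroup V] [Module ℍ[ℝ] V] {g : V → V → ℍ[ℝ]} {p q : V}
  {R : V → V → V →ₗ[ℍ[ℝ]] V}

lemma apply_eq_smul (hR : IsStabilizerCurvature g p R) (hg : IsHermitianForm g)
    (hpq : g p q = 1) (u v : V) : R u v p = g (R u v p) q • p :=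
  have ⟨_, hc⟩ := hR.preserves_line u v
  hg.eq_smul_of_eq_smul hpq hc

lemma coeff_eq (hR : IsStabilizerCurvature g p R) (hg : IsHermitianForm g) (hpq : g p q = 1)
    (u v : V) :
    g (R u v p) q = g (R u q p) q * g p v - g (R v q p) q * g p u := by
  have hpair : ∀ u v y, g p (R u v y) = -(g (R u v p) q * g p y) := fun u v y => by
    rw [eq_neg_of_add_eq_zero_right (hR.skew_adjoint u v p y), ← hg.smul_left,
      ← apply_eq_smul hR hg hpq]
  have hbianchi : g p (R u v q) + g p (R v q u) + g p (R q u v) = 0 := by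
    rw [← hg.add_right, ← hg.add_right, hR.bianchi, hg.zero_right]
  rw [hpair v q u, hpair q u v, hR.antisymm q u, LinearMap.neg_apply, hg.neg_left, neg_mul,
    neg_neg] at hbianchi
  rw [eq_neg_of_add_eq_zero_left (hR.skew_adjoint u v p q)]
  linear_combination (norm := abel) -hbianchi

lemma apply_eq_zero (hR : IsStabilizerCurvature g p R) (hg : IsHermitianForm g)
    (hpq : g p q = 1) {a₀ : ℍ[ℝ]} (ha₀ : a₀ ≠ 0)
    (hcoeff : ∀ u v, ∃ t : ℝ, g (R u v p) q = t • a₀) (u v : V) : R u v p = 0 := by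
  obtain ⟨i, hi⟩ : ∃ i : ℍ[ℝ], i.imI = 1 ∧ i.imJ = 0 := ⟨⟨0, 1, 0, 0⟩, rfl, rfl⟩
  obtain ⟨j, hj⟩ : ∃ j : ℍ[ℝ], j.imJ = 1 := ⟨⟨0, 0, 1, 0⟩, rfl⟩
  have hcq : ∀ x : ℍ[ℝ], g p (x • q) = star x := fun x => by
    rw [hg.smul_right, hpq, one_mul]
  have hreal : ∀ u v (x : ℍ[ℝ]), a₀ * x = g (R u v p) q → x.imI = 0 ∧ x.imJ = 0 :=
    fun u v x hx => by
      obtain ⟨t, ht⟩ := hcoeff u v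
      simp [Quaternion.eq_coe_of_mul_eq_smul ha₀ (hx.trans ht)]
  have hφi : g (R (i • q) q p) q = 0 := by
    obtain ⟨s, hs⟩ := hcoeff (i • q) q
    obtain ⟨t, ht⟩ := hcoeff (j • q) q
    have h := (hreal (i • q) (j • q) (s • star j - t • star i) (by
      rw [coeff_eq hR hg hpq, hs, ht, hcq, hcq, mul_sub, mul_smul_comm, mul_smul_comm,
        smul_mul_assoc, smul_mul_assoc])).2
    rw [hs, show s = 0 by simpa [hi, hj] using h, zero_smul]
  have hφ : ∀ u, g (R u q p) q = 0 := fun u => by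
    obtain ⟨s, hs⟩ := hcoeff u q
    have h := (hreal u (i • q) (s • star i) (by
      rw [coeff_eq hR hg hpq, hφi, hs, hcq, zero_mul, sub_zero, mul_smul_comm,
        smul_mul_assoc])).1
    rw [hs, show s = 0 by simpa [hi] using h, zero_smul]
  rw [apply_eq_smul hR hg hpq, coeff_eq hR hg hpq, hφ, hφ, zero_mul, zero_mul, sub_zero,
    zero_smul]

end IsStabilizerCurvature

theorem dim_one_H_projection_not_Berger_general {V : Type*} [AddCommGroup V]
    [Module (Quaternion ℝ) V] [Module ℝ V]
    [SMulCommClass (Quaternion ℝ) ℝ V]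
    (g : V → V → Quaternion ℝ)
    (hga' : ∀ x y z, g x (y + z) = g x y + g x z)
    (hgs : ∀ (c : Quaternion ℝ) (x y : V), g (c • x) y = c * g x y)
    (hgh : ∀ x y, star (g y x) = g x y)
    (p q : V) (hpq : g p q = 1)
    (G : Submodule ℝ (V →ₗ[Quaternion ℝ] V))
    (hGstab : ∀ f ∈ G, (∀ x y, g (f x) y + g x (f y) = 0) ∧
      ∃ c : Quaternion ℝ, f p = c • p)
    (a₀ : Quaternion ℝ) (ha₀ : a₀ ≠ 0)
    (hpr : {a : Quaternion ℝ | ∃ f ∈ G, f p = a • p} =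
      {x : Quaternion ℝ | ∃ t : ℝ, x = t • a₀}) :
    Submodule.span ℝ {F : V →ₗ[Quaternion ℝ] V |
      ∃ R : V → V → (V →ₗ[Quaternion ℝ] V),
        (∀ u v, R u v ∈ G) ∧
        (∀ u v, R u v = - R v u) ∧
        (∀ u u' v, R (u + u') v = R u v + R u' v) ∧
        (∀ (r : ℝ) (u v : V), R (r • u) v = r • R u v) ∧
        (∀ u v w, R u v w + R v w u + R w u v = 0) ∧
        ∃ u v, F = R u v} < G := by
  have hg : IsHermitianForm g := ⟨hga', hgs, hgh⟩
  refine lt_of_le_of_ne (Submodule.span_le.mpr ?_) fun hEq => ?_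
  · rintro F ⟨R, hRG, -, -, -, -, u, v, rfl⟩
    exact hRG u v
  obtain ⟨f, hfG, hfp⟩ : a₀ ∈ {a | ∃ f ∈ G, f p = a • p} := hpr ▸ ⟨1, (one_smul ℝ a₀).symm⟩
  have hf0 : f p = 0 := by
    refine (Submodule.span_le (p := LinearMap.ker (LinearMap.applyₗ' ℝ p))).mpr ?_ (hEq ▸ hfG)
    rintro F ⟨R, hRG, hskew, -, -, hbianchi, u, v, rfl⟩
    have hR : IsStabilizerCurvature g p R :=
      ⟨fun u v => (hGstab _ (hRG u v)).1, fun u v => (hGstab _ (hRG u v)).2, hskew, hbianchi⟩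
    show R u v p = 0
    refine hR.apply_eq_zero hg hpq ha₀ (fun u v => ?_) u v
    have hcoeff : g (R u v p) q ∈ {a | ∃ f ∈ G, f p = a • p} :=
      ⟨R u v, hRG u v, hR.apply_eq_smul hg hpq u v⟩
    rwa [hpr] at hcoeff
  exact ha₀ (by rw [← mul_one a₀, ← hpq, ← hg.smul_left, ← hfp, hf0, hg.zero_left])

/-- If `𝔤 ⊆ 𝔰𝔭(1,n+1)_{ℍp}` is a subalgebra whose projection to the `ℍ`-component
(the `a`-entry) has real dimension `1`, then `𝔤` is not a Berger algebra: the span of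
the values of all algebraic curvature tensors of type `𝔤` is a proper subspace of `𝔤`. -/
theorem dim_one_H_projection_not_Berger {V : Type*} [AddCommGroup V]
    [Module (Quaternion ℝ) V] [Module ℝ V] [IsScalarTower ℝ (Quaternion ℝ) V]
    [SMulCommClass (Quaternion ℝ) ℝ V]
    (g : V → V → Quaternion ℝ)
    (hga : ∀ x y z, g (x + y) z = g x z + g y z)
    (hga' : ∀ x y z, g x (y + z) = g x y + g x z)
    (hgs : ∀ (c : Quaternion ℝ) (x y : V), g (c • x) y = c * g x y)
    (hgh : ∀ x y, star (g y x) = g x y)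
    (hnd : ∀ v : V, (∀ w, (g v w).re = 0) → v = 0)
    (p q : V) (hp : g p p = 0) (hq : g q q = 0) (hpq : g p q = 1)
    (hspan : ∀ v : V, ∃ c d : Quaternion ℝ, ∃ e ∈ Esub g p q, v = c • p + d • q + e)
    (G : Submodule ℝ (V →ₗ[Quaternion ℝ] V))
    (hGstab : ∀ f ∈ G, (∀ x y, g (f x) y + g x (f y) = 0) ∧
      ∃ c : Quaternion ℝ, f p = c • p)
    (hGlie : ∀ f ∈ G, ∀ f' ∈ G, f ∘ₗ f' - f' ∘ₗ f ∈ G)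
    (a₀ : Quaternion ℝ) (ha₀ : a₀ ≠ 0)
    (hpr : {a : Quaternion ℝ | ∃ f ∈ G, f p = a • p} =
      {x : Quaternion ℝ | ∃ t : ℝ, x = t • a₀}) :
    Submodule.span ℝ {F : V →ₗ[Quaternion ℝ] V |
      ∃ R : V → V → (V →ₗ[Quaternion ℝ] V),
        (∀ u v, R u v ∈ G) ∧
        (∀ u v, R u v = - R v u) ∧
        (∀ u u' v, R (u + u') v = R u v + R u' v) ∧
        (∀ (r : ℝ) (u v : V), R (r • u) v = r • R u v) ∧
        (∀ u v w, R u v w + R v w u + R w u v = 0) ∧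
        ∃ u v, F = R u v} < G :=
  dim_one_H_projection_not_Berger_general g hga' hgs hgh p q hpq G hGstab a₀ ha₀ hpr
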